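/- Let l ≥ 3 be odd, let 𝔤 ≥ 1 and n_v ≥ 0, and assume 3 ∣ l whenever n_v > 0. Let G be the group with presentation ⟨y₁, …, y_{n_v}, z, d₁, …, d_{𝔤} | y_j³ = 1 (1 ≤ j ≤ n_v), z^l = 1, y₁⋯y_{n_v}·z·d₁²⋯d_{𝔤}² = 1⟩. Then the number of surjective group homomorphisms φ from G to the cyclic group Z/lZ such that φ(y_j) has order exactly 3 for every j and φ(z) has order exactly l, equals l^{𝔤−1} · φ_E(l) · 2^{n_v}, where φ_E is Euler's totient function. -/

import Mathlib

/-- Generators of the fundamental group of a closed non-orientable orbifold of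
genus `gg` with signature `(gg; [3,…,3 (nv times), l])`: the branch-point generators
`y₁, …, y_{nv}` (`Sum.inl`), the generator `z` of the face branch point
(`Sum.inr (Sum.inl ())`), and the crosscap generators `d₁, …, d_{gg}`
(`Sum.inr (Sum.inr _)`). -/
abbrev OrbGen (nv gg : ℕ) := Sum (Fin nv) (Sum Unit (Fin gg))

/-- The relations `y_j³ = 1`, `z^l = 1`, `y₁ ⋯ y_{nv} · z · d₁² ⋯ d_{gg}² = 1`. -/
def orbRels (nv gg l : ℕ) : Set (FreeGroup (OrbGen nv gg)) :=
  (Set.range fun j : Fin nv => (FreeGroup.of (Sum.inl j : OrbGen nv gg)) ^ 3) ∪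
  {(FreeGroup.of (Sum.inr (Sum.inl ()) : OrbGen nv gg)) ^ l} ∪
  {(List.ofFn fun j : Fin nv => FreeGroup.of (Sum.inl j : OrbGen nv gg)).prod *
    FreeGroup.of (Sum.inr (Sum.inl ()) : OrbGen nv gg) *
    (List.ofFn fun i : Fin gg =>
      (FreeGroup.of (Sum.inr (Sum.inr i) : OrbGen nv gg)) ^ 2).prod}

/-!
A homomorphism to the abelian group `M ≅ ℤ/l` is a choice of images `(y, z, d)` of the
generators with `∏ yⱼ · z · ∏ dᵢ² = 1`, and `ord z = l` already makes it surjective. As `l` is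
odd, squaring is a bijection of `M`, so once `y` and `z` are fixed the relation leaves
`d₂, …, d_𝔤` free and determines `d₁`: `l ^ (𝔤 - 1)` choices. In the cyclic group `M` there are
`φ(l)` choices for `z` and, as `3 ∣ l`, `φ(3) = 2` choices for each `yⱼ`.
-/

namespace PresentedGroup

variable {α G : Type*} [Group G] {rels : Set (FreeGroup α)}

theorem lift_of_eq_one (φ : PresentedGroup rels →* G) {r : FreeGroup α} (hr : r ∈ rels) :
    FreeGroup.lift (fun a => φ (of a)) r = 1 := by
  have : FreeGroup.lift (fun a => φ (of a)) = φ.comp (mk rels) :=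
    FreeGroup.ext_hom _ _ fun _ => FreeGroup.lift_apply_of
  rw [this, MonoidHom.comp_apply, one_of_mem hr, map_one]

noncomputable def homEquiv :
    (PresentedGroup rels →* G) ≃ {f : α → G // ∀ r ∈ rels, FreeGroup.lift f r = 1} where
  toFun φ := ⟨fun a => φ (of a), fun _ => lift_of_eq_one φ⟩
  invFun f := toGroup f.2
  left_inv _ := ext fun _ => toGroup.of _
  right_inv _ := Subtype.ext <| funext fun _ => toGroup.of _

noncomputable def homSubtypeEquiv (p : (α → G) → Prop) :
    {φ : PresentedGroup rels →* G // p fun a => φ (of a)} ≃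
      {f : α → G // (∀ r ∈ rels, FreeGroup.lift f r = 1) ∧ p f} :=
  (homEquiv.subtypeEquiv fun _ => Iff.rfl).trans (Equiv.subtypeSubtypeEquivSubtypeInter _ p)

end PresentedGroup

theorem MonoidHom.surjective_of_orderOf_eq_card {G M : Type*} [Group G] [Group M] [Finite M]
    (φ : G →* M) {x : G} (h : orderOf (φ x) = Nat.card M) : Function.Surjective φ := by
  have hx : Subgroup.zpowers (φ x) = ⊤ :=
    Subgroup.eq_top_of_card_eq _ (by rw [Nat.card_zpowers, h])
  rw [← MonoidHom.range_eq_top, eq_top_iff, ← hx, Subgroup.zpowers_le]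
  exact ⟨x, rfl⟩

theorem IsCyclic.natCard_orderOf_eq_totient {G : Type*} [Group G] [IsCyclic G] [Finite G]
    {d : ℕ} (hd : d ∣ Nat.card G) : Nat.card {x : G // orderOf x = d} = d.totient := by
  classical
  have := Fintype.ofFinite G
  rw [Nat.card_eq_fintype_card, Fintype.card_subtype]
  exact IsCyclic.card_orderOf_eq_totient (Nat.card_eq_fintype_card (α := G) ▸ hd)

section Fiber

variable {M : Type*} [CommGroup M]

def prodFiberEquiv (m : ℕ) (c : M) : {d : Fin (m + 1) → M // ∏ i, d i = c} ≃ (Fin m → M) where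
  toFun d := Fin.tail d.1
  invFun t := ⟨Fin.cons (c * (∏ i, t i)⁻¹) t, by simp [Fin.prod_univ_succ]⟩
  left_inv d := by
    have hd := d.2
    rw [Fin.prod_univ_succ] at hd
    ext i
    refine Fin.cases ?_ (fun _ => rfl) i
    simp [← hd, Fin.tail]
  right_inv _ := rfl

noncomputable def prodPowFiberEquiv {n : ℕ} (hn : (Nat.card M).Coprime n) (m : ℕ) (c : M) :
    {d : Fin (m + 1) → M // ∏ i, d i ^ n = c} ≃ (Fin m → M) :=
  (Equiv.subtypeEquiv (Equiv.piCongrRight fun _ => powCoprime hn) fun _ => by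
    simp [powCoprime_apply]).trans (prodFiberEquiv m c)

end Fiber

theorem card_forall_orderOf_eq {ι G : Type*} [Finite ι] [Monoid G] (d : ℕ) :
    Nat.card {y : ι → G // ∀ i, orderOf (y i) = d} =
      Nat.card {x : G // orderOf x = d} ^ Nat.card ι := by
  rw [Nat.card_congr (Equiv.subtypePiEquivPi (p := fun _ x => orderOf x = d)), Nat.card_fun]

abbrev OrderPreservingEpi (nv gg l : ℕ) (M : Type*) [Group M] : Type _ :=
  {φ : PresentedGroup (orbRels nv gg l) →* M //
    Function.Surjective φ ∧
    (∀ j : Fin nv, orderOf (φ (PresentedGroup.of (Sum.inl j))) = 3) ∧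
    orderOf (φ (PresentedGroup.of (Sum.inr (Sum.inl ())))) = l}

section Orbifold

variable {nv gg : ℕ} {M : Type*} [CommGroup M]

theorem lift_orbRels_eq_one_iff {l : ℕ} (f : OrbGen nv gg → M) :
    (∀ r ∈ orbRels nv gg l, FreeGroup.lift f r = 1) ↔
      (∀ j, f (.inl j) ^ 3 = 1) ∧ f (.inr (.inl ())) ^ l = 1 ∧
        (∏ j, f (.inl j)) * f (.inr (.inl ())) * ∏ i, f (.inr (.inr i)) ^ 2 = 1 := by
  simp only [orbRels, Set.union_singleton, Set.mem_insert_iff, Set.mem_range, or_imp,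
    forall_exists_index, forall_and, forall_eq, map_mul, map_list_prod, List.map_ofFn,
    Function.comp_def, FreeGroup.lift_apply_of, List.prod_ofFn, map_pow, forall_apply_eq_imp_iff]
  tauto

variable (nv gg M) in
def orbGenArrowEquiv : (OrbGen nv gg → M) ≃ (Fin nv → M) × M × (Fin gg → M) :=
  (Equiv.sumArrowEquivProdArrow _ _ M).trans <| (Equiv.refl _).prodCongr <|
    (Equiv.sumArrowEquivProdArrow _ _ M).trans <| (Equiv.funUnique Unit M).prodCongr (Equiv.refl _)

/-- `t = (y, z, d)` lists the images of the generators `yⱼ`, `z`, `dᵢ` of `orbRels`. -/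
def IsOrderPreservingTuple (l : ℕ) (t : (Fin nv → M) × M × (Fin gg → M)) : Prop :=
  (∀ j, orderOf (t.1 j) = 3) ∧ orderOf t.2.1 = l ∧ (∏ j, t.1 j) * t.2.1 * ∏ i, t.2.2 i ^ 2 = 1

theorem card_orderPreserving_hom_eq_card_tuples [Finite M] {l : ℕ} (hM : Nat.card M = l) :
    Nat.card (OrderPreservingEpi nv gg l M) =
      Nat.card {t : (Fin nv → M) × M × (Fin gg → M) // IsOrderPreservingTuple l t} := by
  have hsurj (φ : PresentedGroup (orbRels nv gg l) →* M)
      (h : orderOf (φ (PresentedGroup.of (Sum.inr (Sum.inl ())))) = l) : Function.Surjective φ :=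
    φ.surjective_of_orderOf_eq_card (h.trans hM.symm)
  calc _ = Nat.card {φ : PresentedGroup (orbRels nv gg l) →* M //
          (∀ j : Fin nv, orderOf (φ (PresentedGroup.of (Sum.inl j))) = 3) ∧
          orderOf (φ (PresentedGroup.of (Sum.inr (Sum.inl ())))) = l} :=
        Nat.card_congr <| Equiv.subtypeEquivRight fun φ =>
          ⟨fun h => h.2, fun h => ⟨hsurj φ h.2, h⟩⟩
    _ = Nat.card {f : OrbGen nv gg → M // (∀ r ∈ orbRels nv gg l, FreeGroup.lift f r = 1) ∧
          (∀ j, orderOf (f (.inl j)) = 3) ∧ orderOf (f (.inr (.inl ()))) = l} :=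
        Nat.card_congr <| PresentedGroup.homSubtypeEquiv (rels := orbRels nv gg l)
          fun f => (∀ j, orderOf (f (.inl j)) = 3) ∧ orderOf (f (.inr (.inl ()))) = l
    _ = _ := by
      refine Nat.card_congr <| (orbGenArrowEquiv nv gg M).subtypeEquiv fun f => ?_
      rw [lift_orbRels_eq_one_iff]
      constructor
      · rintro ⟨⟨-, -, hrel⟩, hy, hz⟩
        exact ⟨hy, hz, hrel⟩
      · rintro ⟨hy, hz, hrel⟩
        exact ⟨⟨fun j => orderOf_dvd_iff_pow_eq_one.mp (hy j).dvd,
          orderOf_dvd_iff_pow_eq_one.mp hz.dvd, hrel⟩, hy, hz⟩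

def orderPreservingTupleSigmaEquiv (l : ℕ) :
    {t : (Fin nv → M) × M × (Fin gg → M) // IsOrderPreservingTuple l t} ≃
      Σ p : {y : Fin nv → M // ∀ j, orderOf (y j) = 3} × {z : M // orderOf z = l},
        {d : Fin gg → M // ∏ i, d i ^ 2 = ((∏ j, p.1.1 j) * p.2.1)⁻¹} where
  toFun t := ⟨(⟨t.1.1, t.2.1⟩, ⟨t.1.2.1, t.2.2.1⟩), ⟨t.1.2.2, eq_inv_of_mul_eq_one_right t.2.2.2⟩⟩
  invFun p := ⟨(p.1.1.1, p.1.2.1, p.2.1), p.1.1.2, p.1.2.2, by rw [p.2.2, mul_inv_cancel]⟩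
  left_inv _ := rfl
  right_inv _ := rfl

theorem card_orderPreserving_hom_of_isCyclic [IsCyclic M] [Finite M] {l m : ℕ}
    (hM : Nat.card M = l) (hodd : Odd l) (hdvd : 0 < nv → 3 ∣ l) :
    Nat.card (OrderPreservingEpi nv (m + 1) l M) = l ^ m * l.totient * 2 ^ nv := by
  have hcop : (Nat.card M).Coprime 2 := hM ▸ hodd.coprime_two_right
  have hy : Nat.card {y : Fin nv → M // ∀ j, orderOf (y j) = 3} = 2 ^ nv := by
    rw [card_forall_orderOf_eq, Nat.card_fin]
    rcases Nat.eq_zero_or_pos nv with rfl | hnv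
    · rfl
    · rw [IsCyclic.natCard_orderOf_eq_totient (hM ▸ hdvd hnv), Nat.totient_prime Nat.prime_three]
  rw [card_orderPreserving_hom_eq_card_tuples hM, Nat.card_congr <|
    (orderPreservingTupleSigmaEquiv l).trans <|
      (Equiv.sigmaCongrRight fun _ => prodPowFiberEquiv hcop m _).trans (Equiv.sigmaEquivProd _ _),
    Nat.card_prod, Nat.card_prod, hy, IsCyclic.natCard_orderOf_eq_totient (hM ▸ dvd_rfl),
    Nat.card_fun, Nat.card_fin, hM]
  ring

end Orbifold

theorem count_order_preserving_epi_odd_period_general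
    (l gg nv : ℕ) (hodd : Odd l) (hgg : 1 ≤ gg)
    (hdvd : 0 < nv → 3 ∣ l) :
    Nat.card {φ : PresentedGroup (orbRels nv gg l) →* Multiplicative (ZMod l) //
      Function.Surjective φ ∧
      (∀ j : Fin nv, orderOf (φ (PresentedGroup.of (Sum.inl j))) = 3) ∧
      orderOf (φ (PresentedGroup.of (Sum.inr (Sum.inl ())))) = l} =
    l ^ (gg - 1) * Nat.totient l * 2 ^ nv := by
  obtain ⟨m, rfl⟩ : ∃ m, gg = m + 1 := ⟨gg - 1, by omega⟩
  have : NeZero l := ⟨hodd.pos.ne'⟩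
  simpa using
    card_orderPreserving_hom_of_isCyclic (M := Multiplicative (ZMod l)) (by simp) hodd hdvd

/-- for odd `l ≥ 3`, `gg ≥ 1`, `nv ≥ 0` with `3 ∣ l` whenever `nv > 0`,
the number of order-preserving epimorphisms from the fundamental group of the
non-orientable orbifold with signature `(gg; [3,…,3 (nv times), l])` onto `Z/lZ`
equals `l^(gg-1) · φ(l) · 2^nv`. -/
theorem count_order_preserving_epi_odd_period
    (l gg nv : ℕ) (hl : 3 ≤ l) (hodd : Odd l) (hgg : 1 ≤ gg)
    (hdvd : 0 < nv → 3 ∣ l) :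
    Nat.card {φ : PresentedGroup (orbRels nv gg l) →* Multiplicative (ZMod l) //
      Function.Surjective φ ∧
      (∀ j : Fin nv, orderOf (φ (PresentedGroup.of (Sum.inl j))) = 3) ∧
      orderOf (φ (PresentedGroup.of (Sum.inr (Sum.inl ())))) = l} =
    l ^ (gg - 1) * Nat.totient l * 2 ^ nv :=
  count_order_preserving_epi_odd_period_general l gg nv hodd hgg hdvd
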